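/- arXiv:2407.14333 — 4 statements merged into one kernel-verified Lean document; each statement's English description precedes it below -/
import Mathlib

section
/- Fix real numbers k > 0, s with 0 < s ≤ 1, and θ₁, θ₂ with k/s < θ₁ < θ₂ ≤ 1. The (discrete) model effect of upgrading from θ₁ to θ₂ while holding effort fixed at x*(θ₁, s) equals M = Q(θ₂, s, x*(θ₁, s)) - Q(θ₁, s, x*(θ₁, s)) = k/(θ₁ s) - (k/(θ₁ s))^(θ₂/θ₁), and this quantity is strictly positive. -/
/-- For k/s < θ₁ < θ₂ ≤ 1, the discrete model effect of upgrading
from θ₁ to θ₂ holding effort fixed at x*(θ₁, s) equals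
M = k/(θ₁ s) - (k/(θ₁ s))^(θ₂/θ₁) and is strictly positive. -/
theorem stmt_10 (k s θ₁ θ₂ : ℝ) (hk : 0 < k) (hs0 : 0 < s) (hs1 : s ≤ 1)
    (h1 : k / s < θ₁) (h12 : θ₁ < θ₂) (h2 : θ₂ ≤ 1) :
    let Q : ℝ → ℝ → ℝ → ℝ := fun θ s x => 1 - Real.exp (-(θ * s * x))
    let xstar : ℝ → ℝ → ℝ := fun θ s => (1 / (θ * s)) * Real.log (θ * s / k)
    Q θ₂ s (xstar θ₁ s) - Q θ₁ s (xstar θ₁ s)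
        = k / (θ₁ * s) - (k / (θ₁ * s)) ^ (θ₂ / θ₁) ∧
      0 < k / (θ₁ * s) - (k / (θ₁ * s)) ^ (θ₂ / θ₁) := by
  intro Q xstar
  have hθ1 : 0 < θ₁ := lt_trans (div_pos hk hs0) h1
  have hθ1s : 0 < θ₁ * s := mul_pos hθ1 hs0
  have hklt : k < θ₁ * s := (div_lt_iff₀ hs0).mp h1
  have ha0 : 0 < k / (θ₁ * s) := div_pos hk hθ1s
  have ha1 : k / (θ₁ * s) < 1 := (div_lt_one hθ1s).mpr hklt
  have hloga : Real.log (k / (θ₁ * s)) = - Real.log (θ₁ * s / k) := by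
    rw [Real.log_div (ne_of_gt hk) (ne_of_gt hθ1s),
        Real.log_div (ne_of_gt hθ1s) (ne_of_gt hk)]
    ring
  have hx1 : θ₁ * s * xstar θ₁ s = Real.log (θ₁ * s / k) := by
    simp only [xstar]
    field_simp
  have hx2 : θ₂ * s * xstar θ₁ s = (θ₂ / θ₁) * Real.log (θ₁ * s / k) := by
    simp only [xstar]
    field_simp
  have he1 : Real.exp (-(θ₁ * s * xstar θ₁ s)) = k / (θ₁ * s) := by
    rw [hx1, ← hloga, Real.exp_log ha0]
  have he2 : Real.exp (-(θ₂ * s * xstar θ₁ s)) = (k / (θ₁ * s)) ^ (θ₂ / θ₁) := by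
    rw [hx2, Real.rpow_def_of_pos ha0, hloga]
    ring_nf
  have heq : Q θ₂ s (xstar θ₁ s) - Q θ₁ s (xstar θ₁ s)
      = k / (θ₁ * s) - (k / (θ₁ * s)) ^ (θ₂ / θ₁) := by
    simp only [Q]
    rw [he1, he2]
    ring
  refine ⟨heq, ?_⟩
  have hexp : (1 : ℝ) < θ₂ / θ₁ := (one_lt_div hθ1).mpr h12
  have := Real.rpow_lt_rpow_of_exponent_gt ha0 ha1 hexp
  rw [Real.rpow_one] at this
  linarith
end

section
/- Fix real numbers k > 0, θ, s with 0 < θ ≤ 1, 0 < s ≤ 1 and θ s > k. The marginal model effect, defined as the partial derivative of the counterfactual quality Q(θ₂, s, x*(θ₁, s)) with respect to θ₂ evaluated at θ₁ = θ₂ = θ, equals M = (k/(θ² s)) · ln(θ s / k), and this quantity is strictly positive. -/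
/-- The marginal model effect — the derivative of the counterfactual
quality Q(θ₂, s, x*(θ₁, s)) with respect to θ₂ evaluated at θ₁ = θ₂ = θ — equals
M = (k/(θ² s)) · ln(θ s / k) and is strictly positive. -/
theorem stmt_12 (k θ s : ℝ) (hk : 0 < k) (hθ0 : 0 < θ) (hθ1 : θ ≤ 1)
    (hs0 : 0 < s) (hs1 : s ≤ 1) (hint : k < θ * s) :
    let Q : ℝ → ℝ → ℝ → ℝ := fun θ s x => 1 - Real.exp (-(θ * s * x))
    let xstar : ℝ → ℝ → ℝ := fun θ s => (1 / (θ * s)) * Real.log (θ * s / k)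
    HasDerivAt (fun θ₂ : ℝ => Q θ₂ s (xstar θ s))
        ((k / (θ ^ 2 * s)) * Real.log (θ * s / k)) θ ∧
      0 < (k / (θ ^ 2 * s)) * Real.log (θ * s / k) := by
  intro Q xstar
  have hθs : 0 < θ * s := mul_pos hθ0 hs0
  have hlog : 0 < Real.log (θ * s / k) :=
    Real.log_pos (by rw [lt_div_iff₀ hk]; linarith)
  constructor
  · set x := xstar θ s with hx
    have h1 : θ * s * x = Real.log (θ * s / k) := by
      simp only [hx, xstar]
      field_simp
    have hexp : Real.exp (-(θ * s * x)) = k / (θ * s) := by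
      rw [h1, Real.exp_neg, Real.exp_log (by positivity), inv_div]
    have hD : HasDerivAt (fun θ₂ : ℝ => 1 - Real.exp (-(θ₂ * s * x)))
        (-(Real.exp (-(θ * s * x)) * -(1 * s * x))) θ := by
      have h0 : HasDerivAt (fun θ₂ : ℝ => θ₂ * s * x) (1 * s * x) θ :=
        ((hasDerivAt_id θ).mul_const s).mul_const x
      exact ((h0.neg.exp).const_sub 1)
    convert hD using 1
    rw [hexp]
    simp only [hx, xstar]
    field_simp
  · positivity
end

section
/- Fix real numbers k > 0, θ, s with 0 < θ ≤ 1, 0 < s ≤ 1 and θ s > k. The marginal prompting effect, defined as the partial derivative of the counterfactual quality Q(θ₂, s, x*(θ₁, s)) with respect to θ₁ evaluated at θ₁ = θ₂ = θ, equals P = (k/(θ² s)) · (1 - ln(θ s / k)). -/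
/-!
Write `u = θ₁ s`, so that the optimal effort is `x*(u) = log (u / k) / u`, with derivative
`(1 - log (u / k)) / u²`. On the diagonal the optimality condition gives
`exp (-θ s x*) = k / (θ s)`, so by the chain rule the marginal prompting effect is
`θ s · k / (θ s) · s (1 - log (θ s / k)) / (θ s)² = k (1 - log (θ s / k)) / (θ² s)`.
-/

open Real

theorem hasDerivAt_log_div_div_self {k u : ℝ} (hk : k ≠ 0) (hu : u ≠ 0) :
    HasDerivAt (fun u => log (u / k) / u) ((1 - log (u / k)) / u ^ 2) u := by
  have hlog : HasDerivAt (fun u => log (u / k)) u⁻¹ u := by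
    convert ((hasDerivAt_id' u).div_const k).log (div_ne_zero hu hk) using 1
    field_simp
  refine (hlog.div (hasDerivAt_id' u) hu).congr_deriv ?_
  field_simp

theorem exp_neg_mul_log_div_div_self {k u : ℝ} (h : 0 < u / k) :
    exp (-(u * (log (u / k) / u))) = k / u := by
  have hu : u ≠ 0 := by rintro rfl; simp at h
  rw [mul_div_cancel₀ _ hu, exp_neg, exp_log h, inv_div]

theorem stmt_13_general (k θ s : ℝ) (hk : 0 < k) (hθ0 : 0 < θ)
    (hs0 : 0 < s) :
    let Q : ℝ → ℝ → ℝ → ℝ := fun θ s x => 1 - Real.exp (-(θ * s * x))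
    let xstar : ℝ → ℝ → ℝ := fun θ s => (1 / (θ * s)) * Real.log (θ * s / k)
    HasDerivAt (fun θ₁ : ℝ => Q θ s (xstar θ₁ s))
        ((k / (θ ^ 2 * s)) * (1 - Real.log (θ * s / k))) θ := by
  intro Q xstar
  have hts : 0 < θ * s := mul_pos hθ0 hs0
  have hxstar : HasDerivAt (fun θ₁ => xstar θ₁ s)
      ((1 - log (θ * s / k)) / (θ * s) ^ 2 * s) θ := by
    simp only [xstar, one_div_mul_eq_div]
    exact (hasDerivAt_log_div_div_self hk.ne' hts.ne').comp θ (hasDerivAt_mul_const s)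
  have hQ := ((hxstar.const_mul (θ * s)).neg.exp).const_sub 1
  refine hQ.congr_deriv ?_
  simp only [Pi.neg_apply, xstar, one_div_mul_eq_div]
  rw [exp_neg_mul_log_div_div_self (div_pos hts hk)]
  field_simp

/-- The marginal prompting effect — the derivative of the
counterfactual quality Q(θ₂, s, x*(θ₁, s)) with respect to θ₁ (acting only
through the effort argument), evaluated at θ₁ = θ₂ = θ — equals
P = (k/(θ² s)) · (1 - ln(θ s / k)). -/
theorem stmt_13 (k θ s : ℝ) (hk : 0 < k) (hθ0 : 0 < θ) (hθ1 : θ ≤ 1)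
    (hs0 : 0 < s) (hs1 : s ≤ 1) (hint : k < θ * s) :
    let Q : ℝ → ℝ → ℝ → ℝ := fun θ s x => 1 - Real.exp (-(θ * s * x))
    let xstar : ℝ → ℝ → ℝ := fun θ s => (1 / (θ * s)) * Real.log (θ * s / k)
    HasDerivAt (fun θ₁ : ℝ => Q θ s (xstar θ₁ s))
        ((k / (θ ^ 2 * s)) * (1 - Real.log (θ * s / k))) θ :=
  stmt_13_general k θ s hk hθ0 hs0
end

section
/- Fix real numbers k > 0 and θ with 0 < θ ≤ 1. For all s with 0 < s ≤ 1 and θ s > k, the derivative of the marginal prompting effect P(s) = (k/(θ² s)) · (1 - ln(θ s / k)) with respect to user skill s equals (k/(θ² s²)) · (ln(θ s / k) - 2). In particular, if additionally θ s > e² · k, then this derivative is strictly positive: as user skill increases, the marginal prompting effect becomes larger. -/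
/-! Writing `P(s) = c / s · (1 - log (a s))` with `c = k / θ²` and `a = θ / k`, the product rule
gives `P'(s) = -c / s² · (1 - log (a s)) - c / s²`, since `log (a s)` has derivative `1 / s`.
The sign of `P'` is that of `log (θ s / k) - 2`, positive exactly when `θ s > e² k`. -/

open Real

theorem hasDerivAt_log_const_mul {a x : ℝ} (ha : a ≠ 0) (hx : x ≠ 0) :
    HasDerivAt (fun y => log (a * y)) x⁻¹ x := by
  have h := ((hasDerivAt_id' x).const_mul a).log (mul_ne_zero ha hx)
  exact h.congr_deriv (by field_simp)

theorem hasDerivAt_div_mul_one_sub_log (c : ℝ) {a x : ℝ} (ha : a ≠ 0) (hx : x ≠ 0) :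
    HasDerivAt (fun y => c / y * (1 - log (a * y))) (c / x ^ 2 * (log (a * x) - 2)) x := by
  have hquot : HasDerivAt (fun y => c / y) (-c / x ^ 2) x := by
    simpa [div_eq_mul_inv, neg_div] using (hasDerivAt_inv hx).const_mul c
  exact (hquot.mul ((hasDerivAt_log_const_mul ha hx).const_sub 1)).congr_deriv (by field_simp; ring)

theorem stmt_16_general (k θ : ℝ) (hk : 0 < k) (hθ0 : 0 < θ) :
    ∀ s : ℝ, 0 < s → s ≤ 1 → k < θ * s →
      HasDerivAt (fun s' : ℝ => (k / (θ ^ 2 * s')) * (1 - Real.log (θ * s' / k)))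
          ((k / (θ ^ 2 * s ^ 2)) * (Real.log (θ * s / k) - 2)) s ∧
        (Real.exp 2 * k < θ * s →
          0 < (k / (θ ^ 2 * s ^ 2)) * (Real.log (θ * s / k) - 2)) := by
  intro s hs _ _
  refine ⟨?_, fun hexp => ?_⟩
  · have h := hasDerivAt_div_mul_one_sub_log (k / θ ^ 2) (div_ne_zero hθ0.ne' hk.ne') hs.ne'
    simp only [div_div, ← mul_div_right_comm θ] at h
    exact h
  · have hlog : 2 < log (θ * s / k) := by
      rw [lt_log_iff_exp_lt (by positivity), lt_div_iff₀ hk]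
      exact hexp
    have := sub_pos.mpr hlog
    positivity

/-- For all s with 0 < s ≤ 1 and θ s > k, the derivative in s of the
marginal prompting effect P(s) = (k/(θ² s)) · (1 - ln(θ s / k)) equals
(k/(θ² s²)) · (ln(θ s / k) - 2); if additionally θ s > e² · k, this derivative is
strictly positive. -/
theorem stmt_16 (k θ : ℝ) (hk : 0 < k) (hθ0 : 0 < θ) (hθ1 : θ ≤ 1) :
    ∀ s : ℝ, 0 < s → s ≤ 1 → k < θ * s →
      HasDerivAt (fun s' : ℝ => (k / (θ ^ 2 * s')) * (1 - Real.log (θ * s' / k)))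
          ((k / (θ ^ 2 * s ^ 2)) * (Real.log (θ * s / k) - 2)) s ∧
        (Real.exp 2 * k < θ * s →
          0 < (k / (θ ^ 2 * s ^ 2)) * (Real.log (θ * s / k) - 2)) :=
  stmt_16_general k θ hk hθ0
end
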